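/- The Grothendieck group of the category LRF of labeled rooted forests, defined as the free abelian group on isomorphism classes modulo the relation [L] = [M] + [N] for every short exact sequence ∅ → M → L → N → ∅, is isomorphic to Z, generated by the class of the one-vertex tree. -/

import Mathlib

attribute [local instance] Classical.propDecidable

noncomputable section

/-- A labeled rooted forest: a finite set of vertex labels together with a
parent function (`none` = root), acyclic via a depth function. -/
structure Forest where
  verts : Finset ℕ
  parent : ℕ → Option ℕ
  parent_mem : ∀ v ∈ verts, ∀ p, parent v = some p → p ∈ verts
  wf : ∃ d : ℕ → ℕ, ∀ v ∈ verts, ∀ p, parent v = some p → d p < d v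

namespace Forest

/-- `S` is the vertex set of a subforest of `F` (the branches `P_C(F)` severed by an
admissible cut `C`): a subset of the vertices closed under passing to children. -/
def IsSub (F : Forest) (S : Finset ℕ) : Prop :=
  S ⊆ F.verts ∧ ∀ v ∈ S, ∀ w ∈ F.verts, F.parent w = some v → w ∈ S

/-- The subforest `P_C(F)` determined by the (descendant-closed) vertex set `S`. -/
def restrict (F : Forest) (S : Finset ℕ) : Forest where
  verts := S ∩ F.verts
  parent v := (F.parent v).bind fun p =>
    if v ∈ S ∩ F.verts ∧ p ∈ S ∩ F.verts then some p else none
  parent_mem := by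
    intro v hv p hp
    beta_reduce at hp
    cases h : F.parent v with
    | none => rw [h] at hp; simp at hp
    | some q =>
      rw [h] at hp
      simp only [Option.bind_some] at hp
      split at hp
      · rename_i hc; cases hp; exact hc.2
      · simp at hp
  wf := by
    obtain ⟨d, hd⟩ := F.wf
    refine ⟨d, ?_⟩
    intro v hv p hp
    beta_reduce at hp
    cases h : F.parent v with
    | none => rw [h] at hp; simp at hp
    | some q =>
      rw [h] at hp
      simp only [Option.bind_some] at hp
      split at hp
      · rename_i hc; cases hp
        exact hd v (Finset.mem_inter.mp hv).2 _ h
      · simp at hp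

/-- The root part `R_C(F) = F/P_C(F)` determined by the severed vertex set `S`. -/
def quot (F : Forest) (S : Finset ℕ) : Forest where
  verts := F.verts \ S
  parent v := (F.parent v).bind fun p =>
    if v ∈ F.verts \ S ∧ p ∈ F.verts \ S then some p else none
  parent_mem := by
    intro v hv p hp
    beta_reduce at hp
    cases h : F.parent v with
    | none => rw [h] at hp; simp at hp
    | some q =>
      rw [h] at hp
      simp only [Option.bind_some] at hp
      split at hp
      · rename_i hc; cases hp; exact hc.2
      · simp at hp
  wf := by
    obtain ⟨d, hd⟩ := F.wf
    refine ⟨d, ?_⟩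
    intro v hv p hp
    beta_reduce at hp
    cases h : F.parent v with
    | none => rw [h] at hp; simp at hp
    | some q =>
      rw [h] at hp
      simp only [Option.bind_some] at hp
      split at hp
      · rename_i hc; cases hp
        exact hd v (Finset.mem_sdiff.mp hv).1 _ h
      · simp at hp

/-- `φ` realizes an isomorphism of labeled rooted forests (a root- and
incidence-preserving bijection on labels). -/
def IsoMap (F G : Forest) (φ : ℕ → ℕ) : Prop :=
  Set.BijOn φ (F.verts : Set ℕ) (G.verts : Set ℕ) ∧
    ∀ v ∈ F.verts, (F.parent v).map φ = G.parent (φ v)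

/-- Isomorphism of labeled rooted forests. -/
def Iso (F G : Forest) : Prop := ∃ φ, IsoMap F G φ

/-- A function on forests which only depends on the isomorphism class. -/
def Invariant (f : Forest → ℚ) : Prop := ∀ F G, Iso F G → f F = f G

/-- A function on forests supported on finitely many isomorphism classes. -/
def FinSupp (f : Forest → ℚ) : Prop :=
  ∃ s : Finset Forest, ∀ F, f F ≠ 0 → ∃ G ∈ s, Iso F G

/-- The Ringel-Hall convolution product:
`(f × g)(F) = ∑_{G ⊆ F} f(G) · g(F/G)`, the sum running over subforests of `F`. -/
def conv (f g : Forest → ℚ) : Forest → ℚ := fun F =>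
  ∑ S ∈ F.verts.powerset, if F.IsSub S then f (F.restrict S) * g (F.quot S) else 0

end Forest

end

namespace Forest

/-- A (raw) morphism datum in the category `LRF`: a triple `(C₁, C₂, f)`. -/
structure Mor where
  cut1 : Finset ℕ
  cut2 : Finset ℕ
  map : ℕ → ℕ

/-- `(C₁, C₂, f)` is a morphism `F → G` in `LRF`: `C₁` is an admissible cut of `F`
(recorded by the severed vertex set), `C₂` one of `G`, and `f` an isomorphism
`R_{C₁}(F) ≅ P_{C₂}(G)`. -/
def IsMor (F G : Forest) (m : Mor) : Prop :=
  F.IsSub m.cut1 ∧ G.IsSub m.cut2 ∧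
    IsoMap (F.quot m.cut1) (G.restrict m.cut2) m.map

/-- Composition of morphisms in `LRF` (`m : F → F₂` followed by `n : F₂ → F₃`):
the cut of `n` is pulled back through `m` to a cut `E₁ ≥ C₁` of `F`, and the new
image is the image of `R_{E₁}(F)` under the composite map. -/
noncomputable def Mor.comp (F : Forest) (m n : Mor) : Mor :=
  ⟨m.cut1 ∪ ((F.quot m.cut1).verts.filter fun v => m.map v ∈ n.cut1),
   ((F.quot (m.cut1 ∪ ((F.quot m.cut1).verts.filter fun v => m.map v ∈ n.cut1))).verts).image
     (n.map ∘ m.map),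
   n.map ∘ m.map⟩

/-- The identity morphism `(C_null, C_full, id)` of `F`. -/
def idMor (F : Forest) : Mor := ⟨∅, F.verts, id⟩

/-- Equality of morphisms out of `F` (the map only matters on `R_{C₁}(F)`). -/
def MorEq (F : Forest) (m n : Mor) : Prop :=
  m.cut1 = n.cut1 ∧ m.cut2 = n.cut2 ∧
    ∀ v ∈ (F.quot m.cut1).verts, m.map v = n.map v

/-- The zero morphisms `F → G`: morphisms with empty image (factoring through `∅`). -/
def IsZeroMor (F G : Forest) (m : Mor) : Prop := IsMor F G m ∧ m.cut2 = ∅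

end Forest

namespace Forest

/-- `i : A → L` is a kernel of `p : L → B` in `LRF`. -/
def IsKernelOf (A L B : Forest) (i p : Mor) : Prop :=
  IsZeroMor A B (Mor.comp A i p) ∧
    ∀ (A' : Forest) (u : Mor), IsMor A' L u → IsZeroMor A' B (Mor.comp A' u p) →
      ∃ w : Mor, IsMor A' A w ∧ MorEq A' (Mor.comp A' w i) u ∧
        ∀ w' : Mor, IsMor A' A w' → MorEq A' (Mor.comp A' w' i) u → MorEq A' w w'

/-- `p : L → B` is a cokernel of `i : A → L` in `LRF`. -/
def IsCokernelOf (A L B : Forest) (i p : Mor) : Prop :=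
  IsZeroMor A B (Mor.comp A i p) ∧
    ∀ (B' : Forest) (u : Mor), IsMor L B' u → IsZeroMor A B' (Mor.comp A i u) →
      ∃ w : Mor, IsMor B B' w ∧ MorEq L (Mor.comp L p w) u ∧
        ∀ w' : Mor, IsMor B B' w' → MorEq L (Mor.comp L p w') u → MorEq B w w'

/-- `∅ → A → L → B → ∅` is a short exact sequence in `LRF`. -/
def IsShortExact (A L B : Forest) (i p : Mor) : Prop :=
  IsMor A L i ∧ IsMor L B p ∧ IsKernelOf A L B i p ∧ IsCokernelOf A L B i p

end Forest

namespace Forest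

/-- The one-vertex rooted tree. -/
def oneVertexTree : Forest :=
  ⟨{0}, fun _ => none, by simp, ⟨id, by simp⟩⟩

/-- The relations defining the Grothendieck group of `LRF`: `[L] - [M] - [N]`
for each short exact sequence `∅ → M → L → N → ∅`, together with `[M] - [N]` for
isomorphic `M ≅ N` (so that the generators are isomorphism classes). -/
def grothendieckRelations : Set (FreeAbelianGroup Forest) :=
  {x | ∃ (M L N : Forest) (i p : Mor), IsShortExact M L N i p ∧
      x = FreeAbelianGroup.of L - FreeAbelianGroup.of M - FreeAbelianGroup.of N} ∪
    {x | ∃ M N : Forest, Iso M N ∧ x = FreeAbelianGroup.of M - FreeAbelianGroup.of N}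

/-- The Grothendieck group `K(LRF)`. -/
def K0 : Type :=
  FreeAbelianGroup Forest ⧸ AddSubgroup.closure grothendieckRelations

noncomputable instance : AddCommGroup K0 :=
  QuotientAddGroup.Quotient.addCommGroup (AddSubgroup.closure grothendieckRelations)

end Forest

/-!
The number of vertices is additive on short exact sequences of `LRF`: a kernel cuts nothing
away, a cokernel is onto, and the cokernel cuts away exactly the image of the kernel. Hence it
descends to `K0 →+ ℤ`, sending the one-vertex tree to `1`. Conversely, severing a leaf `v` of
`F` is an admissible cut, so `[F] = [•] + [F - v]`, and by induction every class is a multiple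
of `[•]`.
-/

namespace Forest

section

variable {F G H : Forest} {S T U : Finset ℕ}

@[simp] lemma restrict_verts (F : Forest) (S : Finset ℕ) : (F.restrict S).verts = S ∩ F.verts :=
  rfl

@[simp] lemma quot_verts (F : Forest) (S : Finset ℕ) : (F.quot S).verts = F.verts \ S :=
  rfl

lemma isSub_verts (F : Forest) : F.IsSub F.verts :=
  ⟨subset_rfl, fun _ _ _ hw _ => hw⟩

lemma isSub_empty (F : Forest) : F.IsSub ∅ :=
  ⟨Finset.empty_subset _, by simp⟩

def IsInduced (G F : Forest) (T : Finset ℕ) : Prop :=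
  G.verts = T ∧ ∀ v ∈ T, ∀ p, G.parent v = some p ↔ F.parent v = some p ∧ p ∈ T

lemma isInduced_of_parent_eq (hT : G.verts = T)
    (hG : ∀ v, G.parent v =
      (F.parent v).bind fun p => if v ∈ T ∧ p ∈ T then some p else none) :
    G.IsInduced F T := by
  refine ⟨hT, fun v hv p => ?_⟩
  rw [hG]
  cases F.parent v <;> simp only [hv, true_and, Option.bind_none, Option.bind_some] <;> grind

lemma isInduced_restrict (F : Forest) (S : Finset ℕ) :
    (F.restrict S).IsInduced F (S ∩ F.verts) :=
  isInduced_of_parent_eq rfl fun _ => rfl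

lemma isInduced_quot (F : Forest) (S : Finset ℕ) : (F.quot S).IsInduced F (F.verts \ S) :=
  isInduced_of_parent_eq rfl fun _ => rfl

lemma isInduced_self (F : Forest) : F.IsInduced F F.verts :=
  ⟨rfl, fun v hv p => ⟨fun h => ⟨h, F.parent_mem v hv p h⟩, And.left⟩⟩

lemma IsInduced.trans (hG : G.IsInduced F T) (hH : H.IsInduced G U) (hUT : U ⊆ T) :
    H.IsInduced F U := by
  refine ⟨hH.1, fun v hv p => ?_⟩
  rw [hH.2 v hv, hG.2 v (hUT hv)]
  exact ⟨fun ⟨⟨h, _⟩, hp⟩ => ⟨h, hp⟩, fun ⟨h, hp⟩ => ⟨⟨h, hUT hp⟩, hp⟩⟩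

lemma IsInduced.parent_eq_some (hG : G.IsInduced F T) {v p : ℕ} (hv : v ∈ G.verts)
    (h : G.parent v = some p) : F.parent v = some p :=
  ((hG.2 v (hG.1 ▸ hv) p).mp h).1

lemma IsInduced.isoMap_id (hG : G.IsInduced F T) (hH : H.IsInduced F T) : IsoMap G H id := by
  refine ⟨by rw [hG.1, hH.1]; exact Set.bijOn_id _, fun v hv => ?_⟩
  rw [Option.map_id, id]
  exact Option.ext fun p => (hG.2 v (hG.1 ▸ hv) p).trans (hH.2 v (hG.1 ▸ hv) p).symm

lemma IsoMap.comp {φ ψ : ℕ → ℕ} (hψ : IsoMap G H ψ) (hφ : IsoMap F G φ) :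
    IsoMap F H (ψ ∘ φ) :=
  ⟨hψ.1.comp hφ.1, fun v hv => by
    rw [← Option.map_map, hφ.2 v hv, hψ.2 _ (hφ.1.mapsTo hv), Function.comp_apply]⟩

lemma IsoMap.card_eq {φ : ℕ → ℕ} (h : IsoMap F G φ) : F.verts.card = G.verts.card :=
  Finset.card_nbij φ h.1.mapsTo h.1.injOn h.1.surjOn

lemma isoMap_of_verts_eq_empty (hF : F.verts = ∅) (hG : G.verts = ∅) (φ : ℕ → ℕ) :
    IsoMap F G φ :=
  ⟨by simp [hF, hG], by simp [hF]⟩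

lemma isoMap_quot_empty (F : Forest) : IsoMap (F.quot ∅) F id :=
  (isInduced_quot F ∅).isoMap_id (by simpa using isInduced_self F)

lemma isoMap_restrict_verts (F : Forest) : IsoMap F (F.restrict F.verts) id :=
  (isInduced_self F).isoMap_id (by simpa using isInduced_restrict F F.verts)

lemma isoMap_restrict_restrict (h : T ⊆ S) :
    IsoMap (F.restrict T) ((F.restrict S).restrict T) id := by
  have hind := (isInduced_restrict F S).trans (isInduced_restrict _ T) Finset.inter_subset_right
  rw [restrict_verts, ← Finset.inter_assoc, Finset.inter_eq_left.mpr h] at hind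
  exact (isInduced_restrict F T).isoMap_id hind

lemma isoMap_quot_quot (h : S ⊆ T) : IsoMap ((F.quot S).quot (T \ S)) (F.quot T) id := by
  have h' : (F.verts \ S) \ (T \ S) = F.verts \ T := by
    ext x; simp only [Finset.mem_sdiff]; constructor
    · rintro ⟨⟨hx, hxS⟩, hxT⟩; exact ⟨hx, fun hT => hxT ⟨hT, hxS⟩⟩
    · rintro ⟨hx, hxT⟩; exact ⟨⟨hx, fun hS => hxT (h hS)⟩, fun hT => hxT hT.1⟩
  have hind := (isInduced_quot F S).trans (isInduced_quot _ (T \ S)) Finset.sdiff_subset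
  rw [quot_verts, h'] at hind
  exact hind.isoMap_id (isInduced_quot F T)

end

section

variable {F G H : Forest} {S T : Finset ℕ} {m n : Mor}

lemma IsSub.restrict (hT : F.IsSub T) (h : T ⊆ S) : (F.restrict S).IsSub T :=
  ⟨fun _ hv => Finset.mem_inter.mpr ⟨h hv, hT.1 hv⟩, fun v hv w hw hp =>
    hT.2 v hv w (Finset.mem_inter.mp hw).2 ((isInduced_restrict F S).parent_eq_some hw hp)⟩

lemma IsSub.quot (hT : F.IsSub T) : (F.quot S).IsSub (T \ S) :=
  ⟨Finset.sdiff_subset_sdiff hT.1 subset_rfl, fun v hv w hw hp =>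
    Finset.mem_sdiff.mpr ⟨hT.2 v (Finset.mem_sdiff.mp hv).1 w (Finset.mem_sdiff.mp hw).1
      ((isInduced_quot F S).parent_eq_some hw hp), (Finset.mem_sdiff.mp hw).2⟩⟩

namespace Mor

@[simp] lemma comp_cut1 (F : Forest) (m n : Mor) :
    (comp F m n).cut1 = m.cut1 ∪ ((F.verts \ m.cut1).filter fun v => m.map v ∈ n.cut1) :=
  rfl

@[simp] lemma comp_cut2 (F : Forest) (m n : Mor) :
    (comp F m n).cut2 = (F.verts \ (comp F m n).cut1).image (n.map ∘ m.map) :=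
  rfl

def incl (S : Finset ℕ) : Mor := ⟨∅, S, id⟩

def proj (F : Forest) (S : Finset ℕ) : Mor := ⟨S, F.verts \ S, id⟩

def zero (F : Forest) : Mor := ⟨F.verts, ∅, id⟩

end Mor

lemma isMor_incl (hS : F.IsSub S) : IsMor (F.restrict S) F (Mor.incl S) :=
  ⟨isSub_empty _, hS, isoMap_quot_empty _⟩

lemma isMor_proj (hS : F.IsSub S) : IsMor F (F.quot S) (Mor.proj F S) :=
  ⟨hS, isSub_verts _, isoMap_restrict_verts _⟩

lemma IsMor.mem_cut2 (hm : IsMor F G m) {v : ℕ} (hv : v ∈ F.verts \ m.cut1) :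
    m.map v ∈ m.cut2 :=
  (Finset.mem_inter.mp (hm.2.2.1.mapsTo hv)).1

lemma IsMor.image_eq (hm : IsMor F G m) : (F.verts \ m.cut1).image m.map = m.cut2 := by
  apply Finset.coe_injective
  rw [Finset.coe_image]
  exact hm.2.2.1.image_eq.trans (by simp [Finset.inter_eq_left.mpr hm.2.1.1])

lemma IsMor.card_eq (hm : IsMor F G m) : (F.verts \ m.cut1).card = m.cut2.card := by
  rw [← hm.image_eq]
  exact (Finset.card_image_of_injOn hm.2.2.1.injOn).symm

lemma IsMor.restrict_codomain (hm : IsMor F G m) (h : m.cut2 ⊆ S) :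
    IsMor F (G.restrict S) m :=
  ⟨hm.1, hm.2.1.restrict h, (isoMap_restrict_restrict h).comp hm.2.2⟩

lemma IsMor.quot_domain (hm : IsMor F G m) (h : S ⊆ m.cut1) :
    IsMor (F.quot S) G ⟨m.cut1 \ S, m.cut2, m.map⟩ :=
  ⟨hm.1.quot, hm.2.1, hm.2.2.comp (isoMap_quot_quot h)⟩

lemma isZeroMor_iff : IsZeroMor F G m ↔ m.cut1 = F.verts ∧ m.cut2 = ∅ := by
  constructor
  · rintro ⟨hm, h2⟩
    have hcard := hm.card_eq
    rw [h2, Finset.card_empty, Finset.card_eq_zero, Finset.sdiff_eq_empty_iff_subset] at hcard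
    exact ⟨subset_antisymm hm.1.1 hcard, h2⟩
  · rintro ⟨h1, h2⟩
    have hiso : IsoMap (F.quot m.cut1) (G.restrict m.cut2) m.map :=
      isoMap_of_verts_eq_empty (by simp [h1]) (by simp [h2]) _
    exact ⟨⟨h1 ▸ isSub_verts F, h2 ▸ isSub_empty G, hiso⟩, h2⟩

lemma isZeroMor_zero (F G : Forest) : IsZeroMor F G (Mor.zero F) :=
  isZeroMor_iff.mpr ⟨rfl, rfl⟩

lemma isMor_zero (F G : Forest) : IsMor F G (Mor.zero F) :=
  (isZeroMor_zero F G).1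

lemma IsZeroMor.morEq {G' : Forest} {m' : Mor} (h : IsZeroMor F G m) (h' : IsZeroMor F G' m') :
    MorEq F m m' := by
  obtain ⟨h1, h2⟩ := isZeroMor_iff.mp h
  obtain ⟨h1', h2'⟩ := isZeroMor_iff.mp h'
  exact ⟨h1.trans h1'.symm, h2.trans h2'.symm, fun v hv => by simp [h1] at hv⟩

lemma MorEq.symm {m' : Mor} (h : MorEq F m m') : MorEq F m' m :=
  ⟨h.1.symm, h.2.1.symm, fun v hv => (h.2.2 v (h.1 ▸ hv)).symm⟩

lemma MorEq.trans {m' m'' : Mor} (h : MorEq F m m') (h' : MorEq F m' m'') : MorEq F m m'' :=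
  ⟨h.1.trans h'.1, h.2.1.trans h'.2.1, fun v hv => (h.2.2 v hv).trans (h'.2.2 v (h.1 ▸ hv))⟩

lemma IsMor.comp_cut1_eq_verts (hm : IsMor F G m) (h : m.cut2 ⊆ n.cut1) :
    (Mor.comp F m n).cut1 = F.verts := by
  refine subset_antisymm
    (Finset.union_subset hm.1.1 ((Finset.filter_subset _ _).trans Finset.sdiff_subset))
    fun v hv => ?_
  by_cases hv1 : v ∈ m.cut1
  · exact Finset.mem_union_left _ hv1
  · have hv' : v ∈ F.verts \ m.cut1 := Finset.mem_sdiff.mpr ⟨hv, hv1⟩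
    exact Finset.mem_union_right _ (Finset.mem_filter.mpr ⟨hv', h (hm.mem_cut2 hv')⟩)

lemma IsMor.isZeroMor_comp (hm : IsMor F G m) (h : m.cut2 ⊆ n.cut1) :
    IsZeroMor F H (Mor.comp F m n) :=
  isZeroMor_iff.mpr ⟨hm.comp_cut1_eq_verts h, by simp [-Mor.comp_cut1, hm.comp_cut1_eq_verts h]⟩

lemma IsMor.cut2_subset_of_comp (hm : IsMor F G m) (h : (Mor.comp F m n).cut2 = ∅) :
    m.cut2 ⊆ n.cut1 := by
  rw [← hm.image_eq]
  intro x hx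
  obtain ⟨v, hv, rfl⟩ := Finset.mem_image.mp hx
  by_contra hvn
  have hvE : v ∈ F.verts \ (Mor.comp F m n).cut1 := by
    simp_all
  have hmem := Finset.mem_image_of_mem (n.map ∘ m.map) hvE
  rw [← Mor.comp_cut2, h] at hmem
  exact Finset.notMem_empty _ hmem

lemma IsMor.comp_cut2_subset (hm : IsMor F G m) (hn : IsMor G H n) :
    (Mor.comp F m n).cut2 ⊆ n.cut2 := by
  intro x hx
  rw [Mor.comp_cut2] at hx
  obtain ⟨v, hv, rfl⟩ := Finset.mem_image.mp hx
  simp only [Mor.comp_cut1, Finset.mem_sdiff, Finset.mem_union, Finset.mem_filter, not_or,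
    not_and] at hv
  obtain ⟨hvF, hvm, hvn⟩ := hv
  have hvm' : v ∈ F.verts \ m.cut1 := Finset.mem_sdiff.mpr ⟨hvF, hvm⟩
  exact hn.mem_cut2 (Finset.mem_sdiff.mpr ⟨hm.2.1.1 (hm.mem_cut2 hvm'), hvn ⟨hvF, hvm⟩⟩)

lemma IsMor.morEq_comp_incl (hm : IsMor F G m) (S : Finset ℕ) :
    MorEq F (Mor.comp F m (Mor.incl S)) m := by
  have h1 : (Mor.comp F m (Mor.incl S)).cut1 = m.cut1 := by simp [Mor.incl]
  refine ⟨h1, ?_, fun _ _ => rfl⟩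
  rw [Mor.comp_cut2, h1]
  exact hm.image_eq

lemma IsMor.morEq_proj_comp (hm : IsMor (F.quot S) G m) :
    MorEq F (Mor.comp F (Mor.proj F S) m) ⟨S ∪ m.cut1, m.cut2, m.map⟩ := by
  have h1 : (Mor.comp F (Mor.proj F S) m).cut1 = S ∪ m.cut1 := by
    simp only [Mor.comp_cut1, Mor.proj, id_eq, Finset.filter_mem_eq_inter]
    exact congrArg (S ∪ ·) (Finset.inter_eq_right.mpr hm.1.1)
  refine ⟨h1, ?_, fun _ _ => rfl⟩
  rw [Mor.comp_cut2, h1, Finset.sdiff_union_distrib, ← Finset.sdiff_sdiff_left', ← hm.image_eq]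
  rfl

end

section

variable {F A L B : Forest} {S : Finset ℕ} {i p : Mor}

lemma isKernelOf_incl (hS : F.IsSub S) :
    IsKernelOf (F.restrict S) F (F.quot S) (Mor.incl S) (Mor.proj F S) := by
  refine ⟨(isMor_incl hS).isZeroMor_comp subset_rfl, fun A' u hu hz => ?_⟩
  refine ⟨u, hu.restrict_codomain (hu.cut2_subset_of_comp hz.2), hu.morEq_comp_incl S,
    fun w hw hwu => ?_⟩
  exact ((hw.morEq_comp_incl S).symm.trans hwu).symm

lemma isCokernelOf_proj (hS : F.IsSub S) :
    IsCokernelOf (F.restrict S) F (F.quot S) (Mor.incl S) (Mor.proj F S) := by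
  refine ⟨(isMor_incl hS).isZeroMor_comp subset_rfl, fun B' u hu hz => ?_⟩
  have hSu : S ⊆ u.cut1 := (isMor_incl hS).cut2_subset_of_comp hz.2
  have hw := hu.quot_domain hSu
  refine ⟨_, hw, ?_, fun w' hw' hwu => ?_⟩
  · simpa only [Finset.union_sdiff_of_subset hSu] using hw.morEq_proj_comp
  · obtain ⟨h1, h2, h3⟩ := (hw'.morEq_proj_comp).symm.trans hwu
    dsimp only at h1 h2 h3
    have hw'1 : w'.cut1 = u.cut1 \ S := by
      rw [← h1, Finset.union_sdiff_left, Finset.sdiff_eq_self_of_disjoint]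
      exact Finset.disjoint_of_subset_left hw'.1.1 Finset.sdiff_disjoint
    refine ⟨hw'1.symm, h2.symm, fun v hv => (h3 v ?_).symm⟩
    simp only [quot_verts, Finset.mem_sdiff] at hv ⊢
    rw [h1]
    exact ⟨hv.1.1, fun hvu => hv.2 ⟨hvu, hv.1.2⟩⟩

theorem isShortExact_of_isSub (hS : F.IsSub S) :
    IsShortExact (F.restrict S) F (F.quot S) (Mor.incl S) (Mor.proj F S) :=
  ⟨isMor_incl hS, isMor_proj hS, isKernelOf_incl hS, isCokernelOf_proj hS⟩

/-- A kernel is a monomorphism: it cuts nothing away. The subforest `A.restrict i.cut1` admits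
two morphisms into `A` which `i` kills, the zero one and the inclusion, so they must agree. -/
lemma IsKernelOf.cut1_eq_empty (hi : IsMor A L i) (hk : IsKernelOf A L B i p) : i.cut1 = ∅ := by
  set A' := A.restrict i.cut1
  obtain ⟨w, -, -, huniq⟩ :=
    hk.2 A' (Mor.zero A') (isMor_zero A' L) ((isMor_zero A' L).isZeroMor_comp (by simp [Mor.zero]))
  have hzero := huniq _ (isMor_zero A' A)
    (((isMor_zero A' A).isZeroMor_comp (H := L) (by simp [Mor.zero])).morEq
      (isZeroMor_zero A' L))
  have hincl := huniq _ (isMor_incl hi.1)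
    (((isMor_incl hi.1).isZeroMor_comp (H := L) subset_rfl).morEq (isZeroMor_zero A' L))
  have hA' : A'.verts = ∅ := hzero.1.symm.trans hincl.1
  rwa [restrict_verts, Finset.inter_eq_left.mpr hi.1.1] at hA'

/-- A cokernel is an epimorphism: its image is everything. The quotient `B.quot p.cut2` receives
two morphisms from `B` which kill the image of `p`, the zero one and the projection. -/
lemma IsCokernelOf.cut2_eq_verts (hi : IsMor A L i) (hp : IsMor L B p)
    (hc : IsCokernelOf A L B i p) : p.cut2 = B.verts := by
  set B' := B.quot p.cut2
  obtain ⟨w, -, -, huniq⟩ :=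
    hc.2 B' (Mor.zero L) (isMor_zero L B') (hi.isZeroMor_comp hi.2.1.1)
  have hzero := huniq _ (isMor_zero B B')
    ((hp.isZeroMor_comp (H := B') hp.2.1.1).morEq (isZeroMor_zero L B'))
  have hproj := huniq _ (isMor_proj hp.2.1)
    ((hp.isZeroMor_comp (H := B') subset_rfl).morEq (isZeroMor_zero L B'))
  exact hproj.1.symm.trans hzero.1

/-- The inclusion of the subforest `p.cut1` is killed by `p`, so it factors through `i`. -/
lemma IsKernelOf.cut1_eq_cut2 (hi : IsMor A L i) (hp : IsMor L B p)
    (hk : IsKernelOf A L B i p) : p.cut1 = i.cut2 := by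
  refine subset_antisymm ?_ (hi.cut2_subset_of_comp hk.1.2)
  have hu := isMor_incl hp.1
  obtain ⟨w, hw, hwu, -⟩ := hk.2 _ _ hu (hu.isZeroMor_comp subset_rfl)
  have hsub := hw.comp_cut2_subset hi
  rwa [hwu.2.1] at hsub

theorem IsShortExact.card_verts (h : IsShortExact A L B i p) :
    L.verts.card = A.verts.card + B.verts.card := by
  obtain ⟨hi, hp, hk, hc⟩ := h
  have hA := hi.card_eq
  have hB := hp.card_eq
  rw [hk.cut1_eq_empty hi, Finset.sdiff_empty] at hA
  rw [hc.cut2_eq_verts hi hp] at hB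
  rw [← Finset.card_sdiff_add_card_eq_card hp.1.1, hB, hk.cut1_eq_cut2 hi hp, hA, add_comm]

end

section

variable {F G : Forest}

lemma parent_ne_self {v : ℕ} (hv : v ∈ F.verts) : F.parent v ≠ some v := fun h => by
  obtain ⟨d, hd⟩ := F.wf
  exact lt_irrefl _ (hd v hv v h)

lemma iso_oneVertexTree {v : ℕ} (h : F.verts = {v}) : Iso F oneVertexTree := by
  refine ⟨fun _ => 0, by simp [h, oneVertexTree, Set.bijOn_singleton], fun w hw => ?_⟩
  rw [h, Finset.mem_singleton] at hw
  subst hw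
  cases hp : F.parent w with
  | none => rfl
  | some p =>
    have hpw : p = w := by simpa [h] using F.parent_mem w (by simp [h]) p hp
    exact absurd (hpw ▸ hp) (parent_ne_self (by simp [h]))

/-- A vertex of maximal depth is a leaf, and leaves are one-vertex subforests. -/
lemma exists_isSub_singleton (hF : F.verts.Nonempty) : ∃ v ∈ F.verts, F.IsSub {v} := by
  obtain ⟨d, hd⟩ := F.wf
  obtain ⟨v, hv, hmax⟩ := F.verts.exists_max_image d hF
  refine ⟨v, hv, Finset.singleton_subset_iff.mpr hv, fun x hx w hw hpar => ?_⟩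
  rw [Finset.mem_singleton] at hx
  subst hx
  exact absurd (hd w hw x hpar) (not_lt.mpr (hmax w hw))

/-- The class `[F]` of a forest in the Grothendieck group. -/
def toK0 (F : Forest) : K0 := QuotientAddGroup.mk (FreeAbelianGroup.of F)

lemma toK0_eq_add {M L N : Forest} {i p : Mor} (h : IsShortExact M L N i p) :
    toK0 L = toK0 M + toK0 N := by
  have hrel : FreeAbelianGroup.of L - FreeAbelianGroup.of M - FreeAbelianGroup.of N ∈
      AddSubgroup.closure grothendieckRelations :=
    AddSubgroup.subset_closure (Or.inl ⟨M, L, N, i, p, h, rfl⟩)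
  have hzero := (QuotientAddGroup.eq_zero_iff _).mpr hrel
  rwa [QuotientAddGroup.mk_sub, QuotientAddGroup.mk_sub, sub_sub, sub_eq_zero] at hzero

lemma toK0_eq_of_iso (h : Iso F G) : toK0 F = toK0 G :=
  QuotientAddGroup.eq_iff_sub_mem.mpr (AddSubgroup.subset_closure (Or.inr ⟨F, G, h, rfl⟩))

lemma toK0_eq_zero (hF : F.verts = ∅) : toK0 F = 0 := by
  have h := toK0_eq_add (isShortExact_of_isSub (isSub_empty F))
  rw [toK0_eq_of_iso ⟨id, isoMap_quot_empty F⟩,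
    toK0_eq_of_iso ⟨id, isoMap_of_verts_eq_empty (F := F.restrict ∅) (by simp) hF id⟩] at h
  exact left_eq_add.mp h

theorem toK0_eq_card_smul (F : Forest) : toK0 F = F.verts.card • toK0 oneVertexTree := by
  induction hn : F.verts.card generalizing F with
  | zero => rw [toK0_eq_zero (Finset.card_eq_zero.mp hn), zero_smul]
  | succ n ih =>
    obtain ⟨v, hv, hleaf⟩ := exists_isSub_singleton (F := F) (Finset.card_pos.mp (by omega))
    have hS : ({v} : Finset ℕ) ∩ F.verts = {v} := Finset.inter_eq_left.mpr (by simpa using hv)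
    have hquot : (F.quot {v}).verts.card = n := by
      rw [quot_verts, Finset.card_sdiff_of_subset (by simpa using hv), hn, Finset.card_singleton,
        Nat.add_sub_cancel]
    rw [toK0_eq_add (isShortExact_of_isSub hleaf), ih _ hquot,
      toK0_eq_of_iso (iso_oneVertexTree hS), succ_nsmul, add_comm]

def K0.card : K0 →+ ℤ :=
  QuotientAddGroup.lift _ (FreeAbelianGroup.lift fun F => (F.verts.card : ℤ)) <| by
    rw [AddSubgroup.closure_le]
    rintro _ (⟨M, L, N, i, p, h, rfl⟩ | ⟨M, N, ⟨φ, hφ⟩, rfl⟩)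
    · simp [h.card_verts]
    · simp [hφ.card_eq]

@[simp] lemma K0.card_toK0 (F : Forest) : K0.card (toK0 F) = F.verts.card :=
  FreeAbelianGroup.lift_apply_of _ _

lemma K0.mem_zmultiples (x : K0) : x ∈ AddSubgroup.zmultiples (toK0 oneVertexTree) := by
  induction x using QuotientAddGroup.induction_on with | H z => ?_
  induction z using FreeAbelianGroup.induction_on with
  | zero => exact zero_mem _
  | of F => exact ⟨F.verts.card, (natCast_zsmul _ _).trans (toK0_eq_card_smul F).symm⟩
  | neg F hF => exact neg_mem hF
  | add a b ha hb => exact add_mem ha hb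

end

end Forest

open Forest in
/-- The Grothendieck group of `LRF` is isomorphic to `ℤ`, generated
by the class of the one-vertex tree. -/
theorem LRF_grothendieck_group :
    ∃ e : K0 ≃+ ℤ,
      e (QuotientAddGroup.mk (FreeAbelianGroup.of oneVertexTree)) = 1 := by
  have hgen : K0.card (toK0 oneVertexTree) = 1 := by simp [oneVertexTree]
  have hinj : Function.Injective K0.card := by
    refine (injective_iff_map_eq_zero _).mpr fun x hx => ?_
    obtain ⟨n, rfl⟩ := AddSubgroup.mem_zmultiples_iff.mp (K0.mem_zmultiples x)
    rw [map_zsmul, hgen, smul_eq_mul, mul_one] at hx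
    rw [hx, zero_smul]
  have hsurj : Function.Surjective K0.card := fun n =>
    ⟨n • toK0 oneVertexTree, by rw [map_zsmul, hgen, smul_eq_mul, mul_one]⟩
  exact ⟨AddEquiv.ofBijective K0.card ⟨hinj, hsurj⟩, hgen⟩
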